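/- Let Σₙ = {a₁,…,aₙ} with n ∣ a_j for all j, and let w be a two-times differentiable well-proportioned infinite word over Σₙ. Then for each i, lim_{k→∞} |Pref_k(w)|_{a_i} / k = 1/n. -/

import Mathlib

/-!
The run lengths of `Δ(w)` are multiples of `n`, so `Δ(w)` is constant on each block of `n`
consecutive runs of `w`. Well-proportionedness makes the bases of such a block a permutation of
the alphabet, so every block contributes equally many copies of each letter: at block boundaries
`n · |Pref_k(w)|_{a_j} = k` exactly. Between two boundaries the error is at most `n · max a`,
which disappears after dividing by `k`.
-/

/-- Partial sums of a sequence of run lengths. -/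
def partialSum (t : ℕ → ℕ) : ℕ → ℕ
  | 0 => 0
  | k + 1 => partialSum t k + t k

/-- `w` decomposes into maximal runs with base sequence `α` and run-length
sequence `t`. -/
def IsRunDecomp (w α t : ℕ → ℕ) : Prop :=
  (∀ k, 1 ≤ t k) ∧ (∀ k, α k ≠ α (k + 1)) ∧
    ∀ k i, partialSum t k ≤ i → i < partialSum t (k + 1) → w i = α k

/-- `t` is the run-length sequence Δ(w) of the infinite word `w`. -/
def IsDelta (w t : ℕ → ℕ) : Prop := ∃ α, IsRunDecomp w α t

/-- The prefix of length `k` of an infinite word. -/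
def pref (w : ℕ → ℕ) (k : ℕ) : List ℕ := (List.range k).map w

open Finset Filter Topology

lemma existsUnique_eq_of_injective {ι β : Type*} [Finite ι] {a f : ι → β}
    (ha : Function.Injective a) (hf : ∀ j, ∃ m, f m = a j) (j : ι) : ∃! m, f m = a j := by
  choose g hg using hf
  have hg_inj : Function.Injective g := fun j j' h => ha (by rw [← hg, ← hg, h])
  refine ⟨g j, hg j, fun m hm => ?_⟩
  obtain ⟨j', rfl⟩ := Finite.injective_iff_surjective.mp hg_inj m
  rw [ha ((hg j').symm.trans hm)]

lemma StrictMono.exists_le_and_lt_succ {P : ℕ → ℕ} (hP : StrictMono P) {x : ℕ}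
    (hx : P 0 ≤ x) : ∃ k, P k ≤ x ∧ x < P (k + 1) := by
  have h : ∃ k, x < P k := ⟨x + 1, Nat.lt_of_lt_of_le (Nat.lt_succ_self x) (hP.id_le _)⟩
  have hpos : 0 < Nat.find h := Nat.pos_of_ne_zero fun h0 => by
    have := Nat.find_spec h; rw [h0] at this; omega
  refine ⟨Nat.find h - 1, Nat.le_of_not_lt (Nat.find_min h (by omega)), ?_⟩
  rw [Nat.sub_add_cancel hpos]
  exact Nat.find_spec h

lemma le_mul_add_and_mul_le_add_of_gap_le {c P : ℕ → ℕ} {n D : ℕ} (hc : Monotone c)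
    (hP : StrictMono P) (hP0 : P 0 = 0) (hcP : ∀ i, n * c (P i) = P i)
    (hgap : ∀ i, P (i + 1) ≤ P i + D) (x : ℕ) :
    x ≤ n * c x + D ∧ n * c x ≤ x + D := by
  obtain ⟨i, hi, hlt⟩ := hP.exists_le_and_lt_succ (hP0 ▸ Nat.zero_le x)
  have hlo : P i ≤ n * c x := hcP i ▸ Nat.mul_le_mul_left n (hc hi)
  have hhi : n * c x ≤ P (i + 1) := hcP (i + 1) ▸ Nat.mul_le_mul_left n (hc hlt.le)
  have := hgap i
  omega

lemma tendsto_div_of_mul_sub_bounded {c : ℕ → ℕ} {n D : ℕ} (hn : 0 < n)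
    (h : ∀ x, x ≤ n * c x + D ∧ n * c x ≤ x + D) :
    Tendsto (fun x => (c x : ℝ) / x) atTop (𝓝 (1 / n)) := by
  have hn' : (0 : ℝ) < n := Nat.cast_pos.mpr hn
  rw [← tendsto_sub_nhds_zero_iff]
  refine squeeze_zero_norm' ?_ (tendsto_const_div_atTop_nhds_zero_nat ((D : ℝ) / n))
  filter_upwards [eventually_gt_atTop 0] with x hx
  have hx' : (0 : ℝ) < x := Nat.cast_pos.mpr hx
  have hbound : |(n : ℝ) * c x - x| ≤ D := by
    obtain ⟨h₁, h₂⟩ := h x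
    rw [abs_le]; constructor
    · have : (x : ℝ) ≤ n * c x + D := by exact_mod_cast h₁
      linarith
    · have : (n : ℝ) * c x ≤ x + D := by exact_mod_cast h₂
      linarith
  calc ‖(c x : ℝ) / x - 1 / n‖ = |(n : ℝ) * c x - x| / n / x := by
        rw [Real.norm_eq_abs, div_sub_div _ _ hx'.ne' hn'.ne', abs_div,
          abs_of_pos (mul_pos hx' hn'), div_div, mul_comm (n : ℝ) x, mul_one,
          mul_comm (c x : ℝ)]
    _ ≤ D / n / x := by gcongr

lemma partialSum_eq_sum_range (t : ℕ → ℕ) (k : ℕ) :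
    partialSum t k = ∑ r ∈ range k, t r := by
  induction k with
  | zero => rfl
  | succ k ih => rw [partialSum, ih, sum_range_succ]

lemma strictMono_partialSum {t : ℕ → ℕ} (ht : ∀ k, 1 ≤ t k) : StrictMono (partialSum t) :=
  strictMono_nat_of_lt_succ fun k => Nat.lt_add_of_pos_right (ht k)

lemma partialSum_add_mul_of_const {t : ℕ → ℕ} {n : ℕ}
    (hconst : ∀ i m, m < n → t (i * n + m) = t (i * n)) (i : ℕ) :
    partialSum t ((i + 1) * n) = partialSum t (i * n) + n * t (i * n) := by
  rw [Nat.succ_mul, partialSum_eq_sum_range, sum_range_add, ← partialSum_eq_sum_range,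
    sum_congr rfl fun m hm => hconst i m (mem_range.mp hm), sum_const, card_range, smul_eq_mul]

lemma pref_add (w : ℕ → ℕ) (k l : ℕ) :
    pref w (k + l) = pref w k ++ (List.range l).map (fun d => w (k + d)) := by
  simp [pref, List.range_add, Function.comp_def]

lemma count_pref_mono (w : ℕ → ℕ) (v : ℕ) : Monotone fun k => (pref w k).count v := by
  intro k k' hk
  obtain ⟨l, rfl⟩ := Nat.exists_eq_add_of_le hk
  simp only [pref_add, List.count_append, Nat.le_add_right]

namespace IsRunDecomp

variable {w α t : ℕ → ℕ}

lemma count_pref_partialSum (hrd : IsRunDecomp w α t) (v k : ℕ) :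
    (pref w (partialSum t k)).count v = ∑ r ∈ range k, if α r = v then t r else 0 := by
  induction k with
  | zero => rfl
  | succ k ih =>
    have hrun : (List.range (t k)).map (fun d => w (partialSum t k + d)) =
        List.replicate (t k) (α k) := by
      refine List.eq_replicate_iff.mpr ⟨by simp, ?_⟩
      simp only [List.mem_map, List.mem_range]
      rintro _ ⟨d, hd, rfl⟩
      exact hrd.2.2 k _ (Nat.le_add_right _ _) (Nat.add_lt_add_left hd _)
    rw [partialSum, pref_add, List.count_append, hrun, List.count_replicate, ih,
      sum_range_succ]
    simp only [beq_iff_eq]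

lemma mul_count_pref_partialSum_mul (hrd : IsRunDecomp w α t) {n v : ℕ}
    (hconst : ∀ i m, m < n → t (i * n + m) = t (i * n))
    (huniq : ∀ i, ∃! m : Fin n, α (i * n + m) = v) (i : ℕ) :
    n * (pref w (partialSum t (i * n))).count v = partialSum t (i * n) := by
  induction i with
  | zero => simp [pref, partialSum]
  | succ i ih =>
    have hcount : (∑ m ∈ range n, if α (i * n + m) = v then t (i * n + m) else 0) =
        t (i * n) := by
      obtain ⟨m₀, hm₀, hm₀_uniq⟩ := huniq i
      rw [sum_range fun m => if α (i * n + m) = v then t (i * n + m) else 0,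
        sum_eq_single m₀ (fun m _ hm => if_neg fun h => hm (hm₀_uniq m h)) (by simp),
        if_pos hm₀, hconst i m₀ m₀.isLt]
    rw [hrd.count_pref_partialSum, partialSum_add_mul_of_const hconst, Nat.succ_mul,
      sum_range_add, hcount, mul_add, ← hrd.count_pref_partialSum, ih]

end IsRunDecomp

lemma IsDelta.apply_mul_add_eq_of_dvd {t d : ℕ → ℕ} (hd : IsDelta t d) {n : ℕ}
    (hdvd : ∀ k, n ∣ d k) (i : ℕ) {m : ℕ} (hm : m < n) : t (i * n + m) = t (i * n) := by
  obtain ⟨β, hd1, -, hrun⟩ := hd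
  have hdvd_sum : ∀ k, n ∣ partialSum d k := fun k => by
    rw [partialSum_eq_sum_range]; exact dvd_sum fun r _ => hdvd r
  obtain ⟨k, hk, hlt⟩ := (strictMono_partialSum hd1).exists_le_and_lt_succ (Nat.zero_le (i * n))
  have hblock : i * n + m < partialSum d (k + 1) := by
    obtain ⟨q, hq⟩ := hdvd_sum (k + 1)
    rw [hq] at hlt ⊢
    have hiq : i + 1 ≤ q := Nat.lt_of_mul_lt_mul_left (by rwa [mul_comm n i])
    nlinarith
  rw [hrun k _ (hk.trans (Nat.le_add_right _ _)) hblock, hrun k _ hk hlt]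

theorem stmt16_general (n : ℕ) (hn : 0 < n) (a : Fin n → ℕ)
    (hinj : Function.Injective a) (hdvd : ∀ j, n ∣ a j)
    (w : ℕ → ℕ)
    (α t d2 : ℕ → ℕ) (hrd : IsRunDecomp w α t)
    (ht : ∀ i, ∃ j, t i = a j)
    (hd2 : IsDelta t d2) (hd2a : ∀ i, ∃ j, d2 i = a j)
    (hwp : ∀ i : ℕ, ∀ j : Fin n, ∃ m : Fin n, α (i * n + m) = a j) :
    ∀ j : Fin n,
      Filter.Tendsto (fun k => ((pref w k).count (a j) : ℝ) / k)
        Filter.atTop (nhds (1 / n)) := by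
  intro j
  have hd2dvd : ∀ k, n ∣ d2 k := fun k => by
    obtain ⟨j', hj'⟩ := hd2a k
    exact hj' ▸ hdvd j'
  have hconst : ∀ i m, m < n → t (i * n + m) = t (i * n) := fun i _ hm =>
    hd2.apply_mul_add_eq_of_dvd hd2dvd i hm
  obtain ⟨M, hM⟩ : ∃ M, ∀ r, t r ≤ M := ⟨univ.sup a, fun r => by
    obtain ⟨j', hj'⟩ := ht r; exact hj' ▸ le_sup (mem_univ j')⟩
  have hcount : ∀ i, n * (pref w (partialSum t (i * n))).count (a j) = partialSum t (i * n) :=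
    hrd.mul_count_pref_partialSum_mul hconst fun i => existsUnique_eq_of_injective hinj (hwp i) j
  have hgap : ∀ i, partialSum t ((i + 1) * n) ≤ partialSum t (i * n) + n * M := fun i => by
    rw [partialSum_add_mul_of_const hconst]
    exact Nat.add_le_add_left (Nat.mul_le_mul_left n (hM _)) _
  exact tendsto_div_of_mul_sub_bounded hn <|
    le_mul_add_and_mul_le_add_of_gap_le (count_pref_mono w (a j))
      ((strictMono_partialSum hrd.1).comp (strictMono_mul_right_of_pos hn))
      (by simp [partialSum]) hcount hgap

/-- Let `Σₙ = {a 1, …, a n}` with `n ∣ a j` for all `j`, and let `w` be a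
two-times differentiable well-proportioned infinite word over `Σₙ` (the run
base sequence `α` of `w` enumerates the whole alphabet on each consecutive
`n`-block, `Δ(w) = t` and `Δ²(w) = d2` are infinite words over `Σₙ`). Then
each letter occurs in `w` with frequency `1/n`. -/
theorem stmt16 (n : ℕ) (hn : 0 < n) (a : Fin n → ℕ)
    (hinj : Function.Injective a) (hdvd : ∀ j, n ∣ a j) (hpos : ∀ j, 0 < a j)
    (w : ℕ → ℕ) (hw : ∀ i, ∃ j, w i = a j)
    (α t d2 : ℕ → ℕ) (hrd : IsRunDecomp w α t)
    (ht : ∀ i, ∃ j, t i = a j)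
    (hd2 : IsDelta t d2) (hd2a : ∀ i, ∃ j, d2 i = a j)
    (hwp : ∀ i : ℕ, ∀ j : Fin n, ∃ m : Fin n, α (i * n + m) = a j) :
    ∀ j : Fin n,
      Filter.Tendsto (fun k => ((pref w k).count (a j) : ℝ) / k)
        Filter.atTop (nhds (1 / n)) :=
  stmt16_general n hn a hinj hdvd w α t d2 hrd ht hd2 hd2a hwp
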